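/- Fix a prime p, an element u ∈ ℤ_p with u − 1 ∈ pℤ_p, and a formal power series H = ∑_{k≥0} a_k X^k with a_k ∈ ℤ_p, and let g : ℕ → ℤ_p be the associated Iwasawa function g(n) = ∑_{k≥0} a_k (u^n − 1)^k. Then for every integer B ≥ 1, g(0) − ∑_{j=1}^{B} (−1)^{j−1} (∑_{i=j}^{B} binom(i−1, j−1)) g(j) ∈ p^B ℤ_p, where binom denotes the binomial coefficient. -/

import Mathlib

/-!
Up to the sign `(-1)^B`, the expression is the `B`-th forward difference `Δ^B g (0)`: the inner
sums equal `C(B, j)` by the hockey-stick identity. `Δ^B` commutes with the convergent series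
defining `g`, and `n ↦ (u^n - 1)^k` is a combination of the characters `n ↦ (u^m)^n`, on which
`Δ^B` acts as multiplication by `(u^m - 1)^B ∈ p^B ℤ_p`. As `p^B ℤ_p` is closed, the series
stays in it.
-/

open Finset fwdDiff

lemma sum_Icc_choose_sub_one {j : ℕ} (hj : 1 ≤ j) (n : ℕ) :
    ∑ i ∈ Icc j n, (i - 1).choose (j - 1) = n.choose j := by
  obtain ⟨j, rfl⟩ := Nat.exists_eq_add_of_le' hj
  cases n with
  | zero => simp
  | succ n =>
    rw [← map_add_right_Icc j n 1, sum_map]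
    simpa using Nat.sum_Icc_choose n j

section ForwardDifferences

variable {R : Type*} [CommRing R]

lemma fwdDiff_iter_pow_apply (x : R) (n y : ℕ) :
    (Δ_[1])^[n] (fun m : ℕ ↦ x ^ m) y = (x - 1) ^ n * x ^ y := by
  simpa using fwdDiff_addChar_eq ⟨(x ^ ·), pow_zero x, pow_add x⟩ y 1 n

lemma pow_sub_one_mem {I : Ideal R} {u : R} (hu : u - 1 ∈ I) (m : ℕ) : u ^ m - 1 ∈ I :=
  Ideal.mem_of_dvd _ (sub_one_dvd_pow_sub_one u m) hu

lemma fwdDiff_iter_pow_sub_one_pow_mem {I : Ideal R} {u : R} (hu : u - 1 ∈ I) (k n y : ℕ) :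
    (Δ_[1])^[n] (fun m : ℕ ↦ (u ^ m - 1) ^ k) y ∈ I ^ n := by
  have hexpand : (fun m : ℕ ↦ (u ^ m - 1) ^ k) =
      ∑ i ∈ range (k + 1), ((-1) ^ (i + k) * k.choose i : R) • fun m : ℕ ↦ (u ^ i) ^ m := by
    ext m
    simp only [sub_pow, Finset.sum_apply, Pi.smul_apply, smul_eq_mul, one_pow, mul_one,
      pow_right_comm u m]
    exact sum_congr rfl fun i _ ↦ by ring
  rw [hexpand, fwdDiff_iter_finsetSum, Finset.sum_apply]
  refine Ideal.sum_mem _ fun i _ ↦ ?_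
  rw [fwdDiff_iter_const_smul, Pi.smul_apply, fwdDiff_iter_pow_apply, smul_eq_mul]
  exact Ideal.mul_mem_left _ _ <|
    Ideal.mul_mem_right _ _ (Ideal.pow_mem_pow (pow_sub_one_mem hu i) n)

lemma neg_one_pow_mul_fwdDiff_iter_apply_zero (g : ℕ → R) (n : ℕ) :
    (-1) ^ n * (Δ_[1])^[n] g 0 = ∑ j ∈ range (n + 1), (-1) ^ j * n.choose j * g j := by
  rw [fwdDiff_iter_eq_sum_shift, mul_sum]
  refine sum_congr rfl fun j hj ↦ ?_
  obtain ⟨d, rfl⟩ := Nat.exists_eq_add_of_le (Nat.lt_succ_iff.mp (mem_range.mp hj))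
  rw [Nat.add_sub_cancel_left, zero_add, smul_eq_mul, mul_one, zsmul_eq_mul]
  push_cast
  calc (-1) ^ (j + d) * ((-1) ^ d * (((j + d).choose j : ℕ) : R) * g j)
      = (-1) ^ j * ((-1) ^ d * (-1) ^ d) * (j + d).choose j * g j := by ring
    _ = _ := by rw [← pow_add, ← two_mul, pow_mul, neg_one_sq, one_pow, mul_one]

lemma sub_sum_Icc_choose_eq_sum_range (g : ℕ → R) (n : ℕ) :
    g 0 - ∑ j ∈ Icc 1 n, (-1) ^ (j - 1) * (∑ i ∈ Icc j n, ((i - 1).choose (j - 1) : R)) * g j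
      = ∑ j ∈ range (n + 1), (-1) ^ j * n.choose j * g j := by
  rw [range_eq_Ico, sum_eq_sum_Ico_succ_bot n.add_one_pos, zero_add, Ico_add_one_right_eq_Icc,
    sub_eq_add_neg, ← sum_neg_distrib, pow_zero, Nat.choose_zero_right, Nat.cast_one, one_mul,
    one_mul]
  refine congrArg _ (sum_congr rfl fun j hj ↦ ?_)
  obtain ⟨j, rfl⟩ := Nat.exists_eq_add_of_le' (mem_Icc.mp hj).1
  rw [← Nat.cast_sum, sum_Icc_choose_sub_one (Nat.le_add_left 1 j), Nat.add_sub_cancel, pow_succ]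
  ring

end ForwardDifferences

theorem HasSum.fwdDiff_iter {ι M G : Type*} [AddCommMonoid M] [AddCommGroup G]
    [TopologicalSpace G] [IsTopologicalAddGroup G] {h : M} {F : ι → M → G} {g : M → G}
    (hF : ∀ y, HasSum (fun i ↦ F i y) (g y)) (n : ℕ) (y : M) :
    HasSum (fun i ↦ (Δ_[h])^[n] (F i) y) ((Δ_[h])^[n] g y) := by
  induction n generalizing F g with
  | zero => exact hF y
  | succ n ih => exact ih (F := fun i ↦ Δ_[h] (F i)) (fun y ↦ (hF (y + h)).sub (hF y))

namespace PadicInt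

variable {p : ℕ} [Fact p.Prime]

lemma summable_mul_pow {x : ℤ_[p]} (hx : ‖x‖ < 1) (a : ℕ → ℤ_[p]) :
    Summable fun k ↦ a k * x ^ k :=
  Summable.of_norm_bounded (summable_geometric_of_lt_one (norm_nonneg x) hx) fun k ↦ by
    simpa only [norm_mul, norm_pow] using
      mul_le_of_le_one_left (pow_nonneg (norm_nonneg x) k) (a k).norm_le_one

lemma norm_pow_sub_one_lt_one {u : ℤ_[p]} (hu : u - 1 ∈ Ideal.span {(p : ℤ_[p])}) (n : ℕ) :
    ‖u ^ n - 1‖ < 1 :=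
  (norm_lt_one_iff_dvd _).2 (Ideal.mem_span_singleton.1 (pow_sub_one_mem hu n))

lemma fwdDiff_iter_tsum_mul_pow_sub_one_pow_mem {u : ℤ_[p]}
    (hu : u - 1 ∈ Ideal.span {(p : ℤ_[p])}) (a : ℕ → ℤ_[p]) (n y : ℕ) :
    (Δ_[1])^[n] (fun m ↦ ∑' k, a k * (u ^ m - 1) ^ k) y ∈ Ideal.span {(p : ℤ_[p])} ^ n := by
  have hsum (m : ℕ) : HasSum (fun k ↦ (a k • fun m : ℕ ↦ (u ^ m - 1) ^ k) m)
      (∑' k, a k * (u ^ m - 1) ^ k) :=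
    (summable_mul_pow (norm_pow_sub_one_lt_one hu m) a).hasSum
  rw [← (HasSum.fwdDiff_iter hsum n y).tsum_eq]
  refine tsum_mem (IsNoetherianRing.isClosed_ideal _) fun k ↦ ?_
  rw [fwdDiff_iter_const_smul, Pi.smul_apply, smul_eq_mul]
  exact Ideal.mul_mem_left _ _ (fwdDiff_iter_pow_sub_one_pow_mem hu k n y)

end PadicInt

theorem iwasawaFn_value_at_zero_congruence_general
    (p : ℕ) [Fact p.Prime] (u : ℤ_[p]) (hu : u - 1 ∈ Ideal.span {(p : ℤ_[p])})
    (a : ℕ → ℤ_[p])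
    (g : ℕ → ℤ_[p]) (hgdef : ∀ n : ℕ, g n = ∑' k : ℕ, a k * (u ^ n - 1) ^ k) :
    ∀ B : ℕ, 1 ≤ B →
      g 0 - ∑ j ∈ Finset.Icc 1 B, (-1 : ℤ_[p]) ^ (j - 1)
          * (∑ i ∈ Finset.Icc j B, ((i - 1).choose (j - 1) : ℤ_[p])) * g j
        ∈ Ideal.span {(p : ℤ_[p])} ^ B := by
  intro B _
  rw [sub_sum_Icc_choose_eq_sum_range, ← neg_one_pow_mul_fwdDiff_iter_apply_zero, funext hgdef]
  exact Ideal.mul_mem_left _ _ (PadicInt.fwdDiff_iter_tsum_mul_pow_sub_one_pow_mem hu a B 0)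

/-- **Rubin's interpolation formula for Iwasawa functions (Proposition MainProp).**
Fix a prime `p`, `u ∈ ℤ_p` with `u − 1 ∈ pℤ_p`, and `H = ∑_k a_k X^k ∈ ℤ_p[[X]]`, and let
`g : ℕ → ℤ_p` be the associated Iwasawa function `g(n) = ∑_k a_k (u^n − 1)^k`.  Then for
every `B ≥ 1`,
`g 0 − ∑_{j=1}^{B} (−1)^{j−1} (∑_{i=j}^{B} C(i−1, j−1)) g(j) ∈ p^B ℤ_p`. -/
theorem iwasawaFn_value_at_zero_congruence
    (p : ℕ) [Fact p.Prime] (u : ℤ_[p]) (hu : u - 1 ∈ Ideal.span {(p : ℤ_[p])})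
    (H : PowerSeries ℤ_[p])
    (a : ℕ → ℤ_[p]) (ha : ∀ k, a k = PowerSeries.coeff k H)
    (g : ℕ → ℤ_[p]) (hgdef : ∀ n : ℕ, g n = ∑' k : ℕ, a k * (u ^ n - 1) ^ k) :
    ∀ B : ℕ, 1 ≤ B →
      g 0 - ∑ j ∈ Finset.Icc 1 B, (-1 : ℤ_[p]) ^ (j - 1)
          * (∑ i ∈ Finset.Icc j B, ((i - 1).choose (j - 1) : ℤ_[p])) * g j
        ∈ Ideal.span {(p : ℤ_[p])} ^ B :=
  iwasawaFn_value_at_zero_congruence_general p u hu a g hgdef
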